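/- In VP_n (n ≥ 3), each generator λ_{nk} (1 ≤ k ≤ n−1) can be expressed in terms of the cabled elements b_{i,j}: λ_{n1} = b_{1,n-2}^{-1} b_{1,n-1}; λ_{nk} = b_{k,n-k-1}^{-1} b_{k,n-k} b_{k-1,n-k+1}^{-1} b_{k-1,n-k} for 1 < k < n−1; and λ_{n,n-1} = b_{n-1,1} b_{n-2,2}^{-1} b_{n-2,1}. -/

import Mathlib

/-- Index predicate for the generators `λ_{i j}` of the virtual pure braid group
`VP n`: `1 ≤ i, j ≤ n` and `i ≠ j` (1-based indices). -/
def VPIdx (n : ℕ) (p : ℕ × ℕ) : Prop :=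
  1 ≤ p.1 ∧ p.1 ≤ n ∧ 1 ≤ p.2 ∧ p.2 ≤ n ∧ p.1 ≠ p.2

instance (n : ℕ) (p : ℕ × ℕ) : Decidable (VPIdx n p) := by
  unfold VPIdx; infer_instance

/-- Generators `λ_{i j}`, `1 ≤ i ≠ j ≤ n`. -/
def VPGen (n : ℕ) := {p : ℕ × ℕ // VPIdx n p}

/-- The generator `λ_{i j}` as an element of the free group (junk value `1` out of range). -/
def lamW {n : ℕ} (i j : ℕ) : FreeGroup (VPGen n) :=
  if h : VPIdx n (i, j) then FreeGroup.of ⟨(i, j), h⟩ else 1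

/-- The defining relations of the virtual pure braid group `VP n`:
`λ_{ij}λ_{kl} = λ_{kl}λ_{ij}` and `λ_{ki}λ_{kj}λ_{ij} = λ_{ij}λ_{kj}λ_{ki}`
(distinct letters denote distinct indices). -/
def VPRels (n : ℕ) : Set (FreeGroup (VPGen n)) :=
  {w | ∃ i j k l : ℕ, VPIdx n (i, j) ∧ VPIdx n (k, l) ∧ i ≠ k ∧ i ≠ l ∧ j ≠ k ∧ j ≠ l ∧
      w = lamW i j * lamW k l * (lamW k l * lamW i j)⁻¹} ∪
  {w | ∃ i j k : ℕ, VPIdx n (i, j) ∧ VPIdx n (k, i) ∧ VPIdx n (k, j) ∧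
      w = lamW k i * lamW k j * lamW i j * (lamW i j * lamW k j * lamW k i)⁻¹}

/-- The virtual pure braid group on `n` strands. -/
abbrev VP (n : ℕ) := PresentedGroup (VPRels n)

/-- The generator `λ_{i j}` of `VP n` (junk value `1` out of range). -/
def lam' {n : ℕ} (i j : ℕ) : VP n :=
  if h : VPIdx n (i, j) then PresentedGroup.of ⟨(i, j), h⟩ else 1

/-- The product `λ_{1 l} λ_{2 l} ⋯ λ_{k-1, l}`. -/
def conjA {n : ℕ} (k l : ℕ) : VP n :=
  ((List.range (k - 1)).map fun j => lam' (j + 1) l).prod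

/-- The product `λ_{l 1}⁻¹ λ_{l 2}⁻¹ ⋯ λ_{l, k-1}⁻¹`. -/
def conjB {n : ℕ} (k l : ℕ) : VP n :=
  ((List.range (k - 1)).map fun j => (lam' l (j + 1))⁻¹).prod

/-- `s` is the family of degeneracy (strand-doubling) homomorphisms
`s_i : VP m → VP (m+1)` (`0 ≤ i ≤ m-1`), acting on the generators by the explicit
cabling formulas of Proposition 3.1 of Bardakov–Mikhailov–Wu. -/
def IsCabling (s : ∀ m : ℕ, ℕ → (VP m →* VP (m + 1))) : Prop :=
  ∀ m k l i : ℕ, 1 ≤ k → k < l → l ≤ m → i < m →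
    (s m i (lam' k l) =
      if i + 1 < k then lam' (k + 1) (l + 1)
      else if i + 1 = k then lam' k (l + 1) * lam' (k + 1) (l + 1)
      else if i + 1 < l then lam' k (l + 1)
      else if i + 1 = l then (conjA k l)⁻¹ * lam' k (l + 1) * conjA k l * lam' k l
      else lam' k l) ∧
    (s m i (lam' l k) =
      if i + 1 < k then lam' (l + 1) (k + 1)
      else if i + 1 = k then lam' (l + 1) (k + 1) * lam' (l + 1) k
      else if i + 1 < l then lam' (l + 1) k
      else if i + 1 = l then lam' l k * ((conjB k l)⁻¹ * lam' (l + 1) k * conjB k l)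
      else lam' l k)

/-- `d` is the family of face (strand-deleting) homomorphisms
`d_i : VP (m+1) → VP m` (`0 ≤ i ≤ m`), acting on the generators by the formulas
of Proposition 3.1 of Bardakov–Mikhailov–Wu. -/
def IsFace (d : ∀ m : ℕ, ℕ → (VP (m + 1) →* VP m)) : Prop :=
  ∀ m k l i : ℕ, 1 ≤ k → k < l → l ≤ m + 1 → i ≤ m →
    (d m i (lam' k l) =
      if i + 1 < k then lam' (k - 1) (l - 1)
      else if i + 1 = k then 1
      else if i + 1 < l then lam' k (l - 1)
      else if i + 1 = l then 1
      else lam' k l) ∧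
    (d m i (lam' l k) =
      if i + 1 < k then lam' (l - 1) (k - 1)
      else if i + 1 = k then 1
      else if i + 1 < l then lam' (l - 1) k
      else if i + 1 = l then 1
      else lam' l k)

/-- `ι` is the family of trivial-strand inclusions `VP m → VP (m+1)`, `λ_{ij} ↦ λ_{ij}`. -/
def IsIncl (ι : ∀ m : ℕ, VP m →* VP (m + 1)) : Prop :=
  ∀ m i j : ℕ, VPIdx m (i, j) → ι m (lam' i j) = lam' i j

/-- Iterated trivial-strand inclusion `VP p → VP (p + q)`. -/
def iotaIter (ι : ∀ m : ℕ, VP m →* VP (m + 1)) (p : ℕ) : (q : ℕ) → (VP p →* VP (p + q))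
  | 0 => MonoidHom.id (VP p)
  | q + 1 => (ι (p + q)).comp (iotaIter ι p q)

/-- The composite `s_{m} s_{m-1} ⋯ s_{skip+1} ŝ_{skip} s_{skip-1} ⋯ s_0 : VP 2 → VP (m+2)`
of `m` degeneracies with the index `skip` omitted. -/
def chain (s : ∀ m : ℕ, ℕ → (VP m →* VP (m + 1))) (skip : ℕ) :
    (m : ℕ) → (VP 2 →* VP (m + 2))
  | 0 => MonoidHom.id (VP 2)
  | m + 1 => (s (m + 2) (if skip ≤ m then m + 1 else m)).comp (chain s skip m)

/-- The cabled element `a_{k, n+2-k} = s_{n+1-1}⋯s_k ŝ_{k-1} s_{k-2}⋯s_0(λ_{1,2}) ∈ VP (n+2)`. -/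
def aa (s : ∀ m : ℕ, ℕ → (VP m →* VP (m + 1))) (n k : ℕ) : VP (n + 2) :=
  chain s (k - 1) n (lam' 1 2)

/-- The cabled element `b_{k, n+2-k} = s_{n+1-1}⋯s_k ŝ_{k-1} s_{k-2}⋯s_0(λ_{2,1}) ∈ VP (n+2)`. -/
def bb (s : ∀ m : ℕ, ℕ → (VP m →* VP (m + 1))) (n k : ℕ) : VP (n + 2) :=
  chain s (k - 1) n (lam' 2 1)

/-- The simplicial subgroups `T_m ≤ VP (m+1)`:
`T_0 = 1`, `T_1 = VP 2`, `T_{m+2} = ⟨s_0(T_{m+1}), …, s_{m+1}(T_{m+1})⟩`. -/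
def TT (s : ∀ m : ℕ, ℕ → (VP m →* VP (m + 1))) : (m : ℕ) → Subgroup (VP (m + 1))
  | 0 => ⊥
  | 1 => ⊤
  | m + 2 => ⨆ i ∈ Finset.range (m + 2), Subgroup.map (s (m + 2) i) (TT s (m + 1))

/-! By induction on `n`, using the cabling formulas for the last two degeneracies, the cabled
element `b_{j,n-j} ∈ VP n` is the ordered product of rows `R_{j+1} R_{j+2} ⋯ R_n`, where
`R_N = λ_{N j} λ_{N,j-1} ⋯ λ_{N 1}`. Hence `b_{j,n-j} = b_{j,n-1-j} R_n` and `b_{n-1,1} = R_n`,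
and the three formulas follow since consecutive rows of the same strand differ by one
generator: `R_n(k) = λ_{n k} R_n(k-1)`. -/

section Rows

variable {M : ℕ}

def lamRow (N : ℕ) : ℕ → VP M
  | 0 => 1
  | j + 1 => lam' N (j + 1) * lamRow N j

lemma lamRow_zero (N : ℕ) : (lamRow N 0 : VP M) = 1 := rfl

lemma lamRow_succ (N j : ℕ) : (lamRow N (j + 1) : VP M) = lam' N (j + 1) * lamRow N j := rfl

lemma lamRow_one (N : ℕ) : (lamRow N 1 : VP M) = lam' N 1 := mul_one _

def rowProd (j : ℕ) : ℕ → VP M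
  | 0 => 1
  | c + 1 => rowProd j c * lamRow (j + 1 + c) j

lemma rowProd_succ (j c : ℕ) :
    (rowProd j (c + 1) : VP M) = rowProd j c * lamRow (j + 1 + c) j := rfl

lemma rowProd_one (j : ℕ) : (rowProd j 1 : VP M) = lamRow (j + 1) j := one_mul _

lemma conjB_succ_eq_lamRow_inv (N r : ℕ) : (conjB (r + 1) N : VP M) = (lamRow N r)⁻¹ := by
  induction r with
  | zero => rfl
  | succ r ih =>
    have h : (conjB (r + 2) N : VP M) = conjB (r + 1) N * (lam' N (r + 1))⁻¹ := by
      simp only [conjB, Nat.add_sub_cancel, show r + 2 - 1 = r + 1 from rfl, List.range_succ,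
        List.map_append, List.prod_append, List.map_cons, List.map_nil, List.prod_cons,
        List.prod_nil, mul_one]
    rw [h, ih, lamRow_succ, mul_inv_rev]

lemma map_lamRow {a b : ℕ} (f : VP a →* VP b) {N N' j : ℕ}
    (h : ∀ i, 1 ≤ i → i ≤ j → f (lam' N i) = lam' N' i) :
    f (lamRow N j) = lamRow N' j := by
  induction j with
  | zero => exact map_one f
  | succ j ih =>
    rw [lamRow_succ, map_mul, h (j + 1) (by omega) le_rfl,
      ih fun i h1 h2 => h i h1 (by omega), lamRow_succ]

lemma map_rowProd {a b : ℕ} (f : VP a →* VP b) {j c : ℕ}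
    (h : ∀ t < c, f (lamRow (j + 1 + t) j) = lamRow (j + 1 + t) j) :
    f (rowProd j c) = rowProd j c := by
  induction c with
  | zero => exact map_one f
  | succ c ih =>
    rw [rowProd_succ, map_mul, h c (by omega), ih fun t ht => h t (by omega), rowProd_succ]

end Rows

namespace IsCabling

variable {s : ∀ m : ℕ, ℕ → (VP m →* VP (m + 1))} (hs : IsCabling s) {n : ℕ}
include hs

lemma s_last_lam_of_lt {N i : ℕ} (hi : 1 ≤ i) (hiN : i < N) (hN : N ≤ n + 1) :
    s (n + 2) (n + 1) (lam' N i) = lam' N i := by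
  have h := (hs (n + 2) i N (n + 1) hi hiN (by omega) (by omega)).2
  rwa [if_neg (by omega), if_neg (by omega), if_neg (by omega), if_neg (by omega)] at h

lemma s_last_lam_last {r : ℕ} (hr : r ≤ n) :
    s (n + 2) (n + 1) (lam' (n + 2) (r + 1)) =
      lam' (n + 2) (r + 1) *
        (lamRow (n + 2) r * lam' (n + 3) (r + 1) * (lamRow (n + 2) r)⁻¹) := by
  have h := (hs (n + 2) (r + 1) (n + 2) (n + 1) (by omega) (by omega) le_rfl (by omega)).2
  rw [if_neg (by omega), if_neg (by omega), if_neg (by omega), if_pos rfl] at h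
  rw [h, conjB_succ_eq_lamRow_inv, inv_inv]

lemma s_prev_lam_last {i : ℕ} (hi : 1 ≤ i) (hin : i ≤ n) :
    s (n + 2) n (lam' (n + 2) i) = lam' (n + 3) i := by
  have h := (hs (n + 2) i (n + 2) n hi (by omega) le_rfl (by omega)).2
  rwa [if_neg (by omega), if_neg (by omega), if_pos (by omega)] at h

lemma s_prev_lam_last_prev :
    s (n + 2) n (lam' (n + 2) (n + 1)) = lam' (n + 3) (n + 2) * lam' (n + 3) (n + 1) := by
  have h := (hs (n + 2) (n + 1) (n + 2) n (by omega) (by omega) le_rfl (by omega)).2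
  rwa [if_neg (by omega), if_pos (by omega)] at h

/-- The conjugating word in the cabling formula for `λ_{n+2,r+1}` is the rest of the row,
so the images telescope. -/
lemma s_last_lamRow_last {j : ℕ} (hj : j ≤ n + 1) :
    s (n + 2) (n + 1) (lamRow (n + 2) j) = lamRow (n + 2) j * lamRow (n + 3) j := by
  induction j with
  | zero => simp only [lamRow_zero, map_one, mul_one]
  | succ j ih =>
    rw [lamRow_succ, map_mul, ih (by omega), hs.s_last_lam_last (by omega), lamRow_succ,
      lamRow_succ]
    group

lemma s_prev_lamRow_last :
    s (n + 2) n (lamRow (n + 2) (n + 1)) = lamRow (n + 3) (n + 2) := by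
  rw [lamRow_succ, map_mul, hs.s_prev_lam_last_prev,
    map_lamRow _ fun i hi hin => hs.s_prev_lam_last hi hin, lamRow_succ (n + 3) (n + 1),
    lamRow_succ (n + 3) n, mul_assoc]

lemma s_last_rowProd {j : ℕ} (hjn : j ≤ n + 1) :
    s (n + 2) (n + 1) (rowProd j (n + 2 - j)) = (rowProd j (n + 3 - j) : VP (n + 3)) := by
  have hlow : s (n + 2) (n + 1) (rowProd j (n + 1 - j)) = rowProd j (n + 1 - j) :=
    map_rowProd _ fun t ht =>
      map_lamRow _ fun i hi hij => hs.s_last_lam_of_lt hi (by omega) (by omega)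
  rw [show n + 2 - j = n + 1 - j + 1 by omega, show n + 3 - j = n + 1 - j + 1 + 1 by omega,
    rowProd_succ, rowProd_succ, rowProd_succ, show j + 1 + (n + 1 - j) = n + 2 by omega,
    show j + 1 + (n + 1 - j + 1) = n + 3 by omega, map_mul, hlow, hs.s_last_lamRow_last hjn,
    mul_assoc]

end IsCabling

lemma chain_eq_of_le (s : ∀ m : ℕ, ℕ → (VP m →* VP (m + 1))) {a b : ℕ} :
    ∀ {m}, m ≤ a → m ≤ b → chain s a m = chain s b m
  | 0, _, _ => rfl
  | m + 1, ha, hb => by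
    simp only [chain, if_neg (show ¬a ≤ m by omega), if_neg (show ¬b ≤ m by omega),
      chain_eq_of_le s (a := a) (b := b) (m := m) (by omega) (by omega)]

section Cabled

variable {s : ∀ m : ℕ, ℕ → (VP m →* VP (m + 1))}

lemma bb_succ_eq_s_last {n j : ℕ} (hj : j ≤ n + 1) :
    bb s (n + 1) j = s (n + 2) (n + 1) (bb s n j) := by
  simp only [bb, chain, if_pos (show j - 1 ≤ n by omega), MonoidHom.comp_apply]

lemma bb_succ_last_eq_s_prev (n : ℕ) :
    bb s (n + 1) (n + 2) = s (n + 2) n (bb s n (n + 1)) := by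
  simp only [bb, chain, if_neg (show ¬n + 2 - 1 ≤ n by omega), MonoidHom.comp_apply,
    chain_eq_of_le s (a := n + 2 - 1) (b := n + 1 - 1) (m := n) (by omega) (by omega)]

lemma bb_eq_rowProd (hs : IsCabling s) :
    ∀ {n j : ℕ}, 1 ≤ j → j ≤ n + 1 → bb s n j = rowProd j (n + 2 - j)
  | 0, j, hj, hjn => by
    obtain rfl : j = 1 := by omega
    exact (one_mul _).symm
  | n + 1, j, hj, hjn => by
    rcases Nat.lt_or_ge j (n + 2) with hjn' | hjn'
    · rw [bb_succ_eq_s_last (by omega), bb_eq_rowProd hs hj (by omega),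
        hs.s_last_rowProd (by omega)]
    · obtain rfl : j = n + 2 := by omega
      rw [bb_succ_last_eq_s_prev, bb_eq_rowProd hs (by omega) le_rfl,
        show n + 2 - (n + 1) = 1 by omega, show n + 1 + 2 - (n + 2) = 1 by omega, rowProd_one,
        rowProd_one]
      exact hs.s_prev_lamRow_last

lemma IsIncl.map_rowProd {ι : ∀ m : ℕ, VP m →* VP (m + 1)} (hι : IsIncl ι) {n j : ℕ}
    (hjn : j ≤ n + 1) :
    ι (n + 2) (rowProd j (n + 2 - j)) = (rowProd j (n + 2 - j) : VP (n + 3)) :=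
  _root_.map_rowProd _ fun t ht => map_lamRow _ fun i hi hij => hι _ _ _ ⟨by omega, by omega, hi,
    by omega, by omega⟩

lemma bb_succ (hs : IsCabling s) {ι : ∀ m : ℕ, VP m →* VP (m + 1)} (hι : IsIncl ι)
    {n j : ℕ} (hj : 1 ≤ j) (hjn : j ≤ n + 1) :
    bb s (n + 1) j = ι (n + 2) (bb s n j) * lamRow (n + 3) j := by
  rw [bb_eq_rowProd hs hj (by omega), bb_eq_rowProd hs hj hjn, hι.map_rowProd hjn,
    show n + 1 + 2 - j = n + 2 - j + 1 by omega, rowProd_succ,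
    show j + 1 + (n + 2 - j) = n + 3 by omega]

lemma bb_succ_last (hs : IsCabling s) (n : ℕ) :
    bb s (n + 1) (n + 2) = lamRow (n + 3) (n + 2) := by
  rw [bb_eq_rowProd hs (by omega) le_rfl, show n + 1 + 2 - (n + 2) = 1 by omega]
  exact rowProd_one _

end Cabled

/-- (Formula (3.4).) In `VP n` with `n = m + 3 ≥ 3`, each generator
`λ_{n k}` is expressed in terms of the cabled elements `b_{i,j}`
(`b_{i, n-i} = bb s (m+1) i`, and `b_{i, n-1-i} = bb s m i ∈ VP (n-1)` included via `ι`):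
`λ_{n1} = b_{1,n-2}⁻¹ b_{1,n-1}`;
`λ_{nk} = b_{k,n-k-1}⁻¹ b_{k,n-k} b_{k-1,n-k+1}⁻¹ b_{k-1,n-k}` for `1 < k < n-1`;
`λ_{n,n-1} = b_{n-1,1} b_{n-2,2}⁻¹ b_{n-2,1}`. -/
theorem lam_in_terms_of_bb (s : ∀ m : ℕ, ℕ → (VP m →* VP (m + 1)))
    (ι : ∀ m : ℕ, VP m →* VP (m + 1)) (hs : IsCabling s) (hι : IsIncl ι) (m : ℕ) :
    ((lam' (m + 3) 1 : VP (m + 3)) = (ι (m + 2) (bb s m 1))⁻¹ * bb s (m + 1) 1) ∧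
    (∀ k : ℕ, 1 < k → k < m + 2 →
      (lam' (m + 3) k : VP (m + 3)) =
        (ι (m + 2) (bb s m k))⁻¹ * bb s (m + 1) k *
          (bb s (m + 1) (k - 1))⁻¹ * ι (m + 2) (bb s m (k - 1))) ∧
    ((lam' (m + 3) (m + 2) : VP (m + 3)) =
      bb s (m + 1) (m + 2) * (bb s (m + 1) (m + 1))⁻¹ * ι (m + 2) (bb s m (m + 1))) := by
  refine ⟨?_, fun k hk hkm => ?_, ?_⟩
  · rw [bb_succ hs hι le_rfl (by omega), lamRow_one, inv_mul_cancel_left]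
  · obtain ⟨j, rfl⟩ : ∃ j, k = j + 1 := ⟨k - 1, by omega⟩
    rw [bb_succ hs hι (by omega) (by omega), bb_succ hs hι (by omega) (by omega),
      Nat.add_sub_cancel, lamRow_succ]
    group
  · rw [bb_succ_last hs, bb_succ hs hι (by omega) le_rfl, lamRow_succ]
    group
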